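/- arXiv:2201.02985 — 4 statements merged into one kernel-verified Lean document; each statement's English description precedes it below -/
import Mathlib

section
/- For any nonnegative reals $a_1,\dots,a_T$ and $\alpha \ge 1$, one has $\sqrt{\alpha + \sum_{t=1}^{T} a_t} \le \alpha + \sum_{t=1}^{T} \frac{a_t}{\sqrt{\alpha + \sum_{s=1}^{t} a_s}}$. -/
lemma sqrt_step (x b : ℝ) (hx : 0 ≤ x) (hb : 0 ≤ b) :
    Real.sqrt (x + b) ≤ Real.sqrt x + b / Real.sqrt (x + b) := by
  rcases eq_or_lt_of_le (by positivity : (0:ℝ) ≤ x + b) with h | h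
  · simp [← h]
  have hs : 0 < Real.sqrt (x + b) := Real.sqrt_pos.mpr h
  rw [show Real.sqrt x + b / Real.sqrt (x + b)
      = (Real.sqrt x * Real.sqrt (x + b) + b) / Real.sqrt (x + b) by
        field_simp, le_div_iff₀ hs, Real.mul_self_sqrt (by positivity)]
  nlinarith [Real.sq_sqrt hx, Real.sqrt_nonneg x,
    mul_le_mul_of_nonneg_right (Real.sqrt_le_sqrt (by linarith : x ≤ x + b)) hs.le,
    Real.mul_self_sqrt hx]

/-- Lower-bound companion of the adaptive step-size summation lemma: for nonnegative
reals `a 1, ..., a T` and `α ≥ 1` (in particular `α > 0`),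
`√(α + ∑_{t=1}^T a t) ≤ α + ∑_{t=1}^T a t / √(α + ∑_{s=1}^t a s)`. -/
theorem sqrt_le_adaptive_stepsize_sum (T : ℕ) (a : ℕ → ℝ) (α : ℝ)
    (hα : 1 ≤ α) (ha : ∀ t, 0 ≤ a t) :
    Real.sqrt (α + ∑ t ∈ Finset.Icc 1 T, a t)
      ≤ α + ∑ t ∈ Finset.Icc 1 T, a t / Real.sqrt (α + ∑ s ∈ Finset.Icc 1 t, a s) := by
  induction T with
  | zero =>
    simp only [Finset.Icc_eq_empty_of_lt (by norm_num : (1:ℕ) > 0), Finset.sum_empty, add_zero]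
    calc Real.sqrt α ≤ Real.sqrt (α * α) := by
          apply Real.sqrt_le_sqrt; nlinarith
      _ = α := Real.sqrt_mul_self (by linarith)
  | succ n ih =>
    have hin : (∑ s ∈ Finset.Icc 1 (n+1), a s)
        = ∑ s ∈ Finset.Icc 1 n, a s + a (n+1) :=
      Finset.sum_Icc_succ_top (by omega) a
    rw [hin, Finset.sum_Icc_succ_top (by omega : 1 ≤ n + 1), hin, ← add_assoc]
    have key := sqrt_step (α + ∑ t ∈ Finset.Icc 1 n, a t) (a (n+1))
      (by have : 0 ≤ ∑ t ∈ Finset.Icc 1 n, a t := Finset.sum_nonneg fun i _ => ha i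
          linarith) (ha (n+1))
    linarith [key, ih]
end

section
/- Let $X \subseteq \mathbb{R}^n$ be convex and $f : X \to \mathbb{R}$ convex and differentiable. Let $(x^t)_{t \ge 0}$ and $(w^t)_{t \ge 1}$ be sequences in $X$ with $w^t = \frac{R^t}{\beta^t} x^t - \frac{R^{t-1}}{\beta^t} x^{t-1}$ where $\beta^t = t$ and $R^t = \sum_{s=1}^{t} \beta^s$. Then for any $p \in X$: $\sum_{t=1}^{T} \beta^t \langle \nabla f(x^t), w^t - p\rangle \ge R^T\,\big(f(x^T) - f(p)\big)$. -/
/-!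
Since `R t = R (t-1) + t`, the weighted iterate splits the regret term as
`t ⟪∇f(x t), w t - p⟫ = R (t-1) ⟪∇f(x t), x t - x (t-1)⟫ + t ⟪∇f(x t), x t - p⟫`.
The gradient inequality of a convex function bounds the right side below by
`R t (f (x t) - f p) - R (t-1) (f (x (t-1)) - f p)`,
and these lower bounds telescope to `R T (f (x T) - f p)` because `R 0 = 0`.
-/

open scoped RealInnerProductSpace

theorem ConvexOn.sub_le_inner_of_hasGradientAt {E : Type*} [NormedAddCommGroup E]
    [InnerProductSpace ℝ E] [CompleteSpace E] {X : Set E} {f : E → ℝ} (hf : ConvexOn ℝ X f)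
    {z y g : E} (hz : z ∈ X) (hy : y ∈ X) (hg : HasGradientAt f g z) :
    f z - f y ≤ ⟪g, z - y⟫ := by
  have hderiv : HasDerivAt (f ∘ AffineMap.lineMap (k := ℝ) z y) ⟪g, y - z⟫ 0 := by
    have := hg.hasFDerivAt
    rw [← AffineMap.lineMap_apply_zero z y (k := ℝ)] at this
    exact this.comp_hasDerivAt 0 AffineMap.hasDerivAt_lineMap
  have hslope := (hf.comp_affineMap (AffineMap.lineMap z y)).le_slope_of_hasDerivAt
    (by simpa using hz) (by simpa using hy) one_pos hderiv
  rw [slope_def_field] at hslope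
  simp only [Function.comp_apply, AffineMap.lineMap_apply_zero, AffineMap.lineMap_apply_one,
    sub_zero, div_one] at hslope
  rw [← neg_sub y z, inner_neg_right]
  linarith

theorem ConvexOn.weighted_step_le_inner {E : Type*} [NormedAddCommGroup E]
    [InnerProductSpace ℝ E] [CompleteSpace E] {X : Set E} {f : E → ℝ} (hf : ConvexOn ℝ X f)
    {x x' p g : E} (hx : x ∈ X) (hx' : x' ∈ X) (hp : p ∈ X) (hg : HasGradientAt f g x')
    {r β : ℝ} (hr : 0 ≤ r) (hβ : 0 < β) :
    (r + β) * (f x' - f p) - r * (f x - f p)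
      ≤ β * ⟪g, β⁻¹ • ((r + β) • x' - r • x) - p⟫ := by
  have hsplit : β * ⟪g, β⁻¹ • ((r + β) • x' - r • x) - p⟫
      = r * ⟪g, x' - x⟫ + β * ⟪g, x' - p⟫ := by
    simp only [inner_sub_right, real_inner_smul_right]
    field_simp
    ring
  have hx'x := hf.sub_le_inner_of_hasGradientAt hx' hx hg
  have hx'p := hf.sub_le_inner_of_hasGradientAt hx' hp hg
  rw [hsplit]
  linarith [mul_le_mul_of_nonneg_left hx'x hr, mul_le_mul_of_nonneg_left hx'p hβ.le]

theorem le_sum_Icc_of_succ_sub_le {a b : ℕ → ℝ} (h : ∀ t, a (t + 1) - a t ≤ b (t + 1))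
    (T : ℕ) : a T ≤ a 0 + ∑ t ∈ Finset.Icc 1 T, b t := by
  induction T with
  | zero => simp
  | succ T ih =>
    rw [Finset.sum_Icc_succ_top (Nat.le_add_left 1 T)]
    linarith [h T]

theorem weighted_regret_to_gap_general {n : ℕ}
    (X : Set (EuclideanSpace ℝ (Fin n)))
    (f : EuclideanSpace ℝ (Fin n) → ℝ) (hf : ConvexOn ℝ X f)
    (g : EuclideanSpace ℝ (Fin n) → EuclideanSpace ℝ (Fin n))
    (hg : ∀ z ∈ X, HasGradientAt f (g z) z)
    (R : ℕ → ℝ) (hR : ∀ t, R t = ∑ s ∈ Finset.Icc 1 t, (s : ℝ))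
    (x w : ℕ → EuclideanSpace ℝ (Fin n)) (hx : ∀ t, x t ∈ X)
    (hw : ∀ t : ℕ, 1 ≤ t →
      w t = ((t : ℝ))⁻¹ • (R t • x t - R (t - 1) • x (t - 1)))
    (T : ℕ) (p : EuclideanSpace ℝ (Fin n)) (hp : p ∈ X) :
    R T * (f (x T) - f p)
      ≤ ∑ t ∈ Finset.Icc 1 T, (t : ℝ) * ⟪g (x t), w t - p⟫ := by
  have hR_succ (t : ℕ) : R (t + 1) = R t + ((t + 1 : ℕ) : ℝ) := by
    rw [hR, hR, Finset.sum_Icc_succ_top (Nat.le_add_left 1 t)]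
  have hR_nonneg (t : ℕ) : 0 ≤ R t := by
    rw [hR]
    positivity
  have hR_zero : R 0 = 0 := by simp [hR]
  have hstep (t : ℕ) : R (t + 1) * (f (x (t + 1)) - f p) - R t * (f (x t) - f p)
      ≤ ((t + 1 : ℕ) : ℝ) * ⟪g (x (t + 1)), w (t + 1) - p⟫ := by
    rw [hw (t + 1) (Nat.le_add_left 1 t), Nat.add_sub_cancel, hR_succ]
    exact hf.weighted_step_le_inner (hx t) (hx (t + 1)) hp (hg _ (hx (t + 1))) (hR_nonneg t)
      (by positivity)
  simpa [hR_zero] using le_sum_Icc_of_succ_sub_le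
    (a := fun t ↦ R t * (f (x t) - f p)) (b := fun t ↦ (t : ℝ) * ⟪g (x t), w t - p⟫) hstep T

/-- Weighted-average regret-to-gap conversion: with `β t = t`, `R t = ∑_{s=1}^t β s`,
and `w t = (R t • x t - R (t-1) • x (t-1)) / β t`, for a convex differentiable `f` on a
convex set `X` containing the iterates, and any `p ∈ X`,
`∑_{t=1}^T β t ⟪∇f(x t), w t - p⟫ ≥ R T (f (x T) - f p)`. -/
theorem weighted_regret_to_gap {n : ℕ}
    (X : Set (EuclideanSpace ℝ (Fin n))) (hX : Convex ℝ X)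
    (f : EuclideanSpace ℝ (Fin n) → ℝ) (hf : ConvexOn ℝ X f)
    (g : EuclideanSpace ℝ (Fin n) → EuclideanSpace ℝ (Fin n))
    (hg : ∀ z ∈ X, HasGradientAt f (g z) z)
    (R : ℕ → ℝ) (hR : ∀ t, R t = ∑ s ∈ Finset.Icc 1 t, (s : ℝ))
    (x w : ℕ → EuclideanSpace ℝ (Fin n)) (hx : ∀ t, x t ∈ X)
    (hw : ∀ t : ℕ, 1 ≤ t →
      w t = ((t : ℝ))⁻¹ • (R t • x t - R (t - 1) • x (t - 1)))
    (T : ℕ) (p : EuclideanSpace ℝ (Fin n)) (hp : p ∈ X) :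
    R T * (f (x T) - f p)
      ≤ ∑ t ∈ Finset.Icc 1 T, (t : ℝ) * ⟪g (x t), w t - p⟫ :=
  weighted_regret_to_gap_general X f hf g hg R hR x w hx hw T p hp
end

section
/- Let $h(x) = \sum_{i} x_i \log x_i$ on the product of scaled simplices $\mathcal{X} = \prod_{k=1}^{K} \Delta_{m_k} \subseteq \mathbb{R}^N$, with $m_{\max} = \max_k m_k$. Then $h$ is $\frac{1}{K m_{\max}}$-strongly convex on $\mathcal{X}$ with respect to the $\ell^1$ norm: for all $x, y \in \mathcal{X}$ and $\lambda \in [0,1]$, $h(\lambda x + (1-\lambda) y) \le \lambda h(x) + (1-\lambda) h(y) - \frac{\lambda(1-\lambda)}{2 K m_{\max}} \|x - y\|_1^2$. -/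
/-!
With `z = λx + (1-λ)y`, the convexity gap `λh(x) + (1-λ)h(y) - h(z)` equals
`λ KL(x‖z) + (1-λ) KL(y‖z)` for the generalized Kullback–Leibler divergence. All three points
have the same total mass `M = ∑ₖ mₖ ≤ K m_max`, so Pinsker's inequality gives
`KL(x‖z) ≥ ‖x - z‖₁² / (2M) = (1-λ)² ‖x - y‖₁² / (2M)`, and symmetrically for `y`; adding
yields the modulus `1 / M`. Pinsker itself follows coordinatewise from
`3(u - v)² ≤ 2(u + 2v)(u log(u/v) - u + v)` by Cauchy–Schwarz.
-/

open Real Finset InformationTheory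

lemma three_mul_sq_sub_one_le_mul_klFun {t : ℝ} (ht : 0 ≤ t) :
    3 * (t - 1) ^ 2 ≤ 2 * (t + 2) * klFun t := by
  -- `g` is convex on `[0, ∞)` (`g'' = 4 (log t + 1/t - 1) ≥ 0`) with `g' 1 = 0`
  set g : ℝ → ℝ := fun t ↦ 2 * (t + 2) * klFun t - 3 * (t - 1) ^ 2
  set g' : ℝ → ℝ := fun t ↦ 2 * klFun t + 2 * (t + 2) * log t - 6 * (t - 1)
  have hg' (t : ℝ) (ht : t ≠ 0) : HasDerivAt g (g' t) t :=
    ((((hasDerivAt_id t).add_const 2).const_mul 2).mul (hasDerivAt_klFun ht)).sub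
      ((((hasDerivAt_id t).sub_const 1).pow 2).const_mul 3) |>.congr_deriv (by simp [g']; ring)
  have hg'' (t : ℝ) (ht : t ≠ 0) : HasDerivAt g' (4 * (log t + t⁻¹ - 1)) t :=
    (((hasDerivAt_klFun ht).const_mul 2).add
      ((((hasDerivAt_id t).add_const 2).const_mul 2).mul (hasDerivAt_log ht))).sub
      (((hasDerivAt_id t).sub_const 1).const_mul 6)
      |>.congr_deriv (by simp only [id]; field_simp; ring)
  have hconvex : ConvexOn ℝ (Set.Ici 0) g := by
    refine convexOn_of_hasDerivWithinAt2_nonneg (convex_Ici 0) (by fun_prop)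
      (fun t ht ↦ (hg' t ?_).hasDerivWithinAt) (fun t ht ↦ (hg'' t ?_).hasDerivWithinAt)
      (fun t ht ↦ ?_)
    all_goals rw [interior_Ici] at ht
    · exact ht.ne'
    · exact ht.ne'
    · linarith [one_sub_inv_le_log_of_pos ht]
  have hmin : IsMinOn g (Set.Ici 0) 1 := by
    refine hconvex.isMinOn_of_rightDeriv_eq_zero (by simp) ?_
    rw [(hg' 1 one_ne_zero).hasDerivWithinAt.derivWithin (uniqueDiffWithinAt_Ioi 1)]
    simp [g', klFun_one]
  have := hmin (Set.mem_Ici.2 ht)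
  simp only [g, klFun_one, Set.mem_ofPred_eq] at this
  linarith

noncomputable def klTerm (u v : ℝ) : ℝ := u * log u - u * log v - u + v

lemma mul_klFun_div {u v : ℝ} (hv : 0 < v) : v * klFun (u / v) = klTerm u v := by
  rcases eq_or_ne u 0 with rfl | hu
  · simp [klFun_zero, klTerm]
  rw [klFun_apply, klTerm, log_div hu hv.ne']
  field_simp
  ring

lemma klTerm_nonneg {u v : ℝ} (hu : 0 ≤ u) (hv : 0 ≤ v) (huv : v = 0 → u = 0) :
    0 ≤ klTerm u v := by
  rcases hv.eq_or_lt with rfl | hv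
  · simp [klTerm, huv rfl]
  rw [← mul_klFun_div hv]
  exact mul_nonneg hv.le (klFun_nonneg (div_nonneg hu hv.le))

lemma three_mul_sq_sub_le_klTerm {u v : ℝ} (hu : 0 ≤ u) (hv : 0 ≤ v) (huv : v = 0 → u = 0) :
    3 * (u - v) ^ 2 ≤ 2 * (u + 2 * v) * klTerm u v := by
  rcases hv.eq_or_lt with rfl | hv
  · simp [klTerm, huv rfl]
  rw [← mul_klFun_div hv]
  calc 3 * (u - v) ^ 2 = v ^ 2 * (3 * (u / v - 1) ^ 2) := by field_simp
    _ ≤ v ^ 2 * (2 * (u / v + 2) * klFun (u / v)) :=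
      mul_le_mul_of_nonneg_left (three_mul_sq_sub_one_le_mul_klFun (div_nonneg hu hv.le))
        (sq_nonneg v)
    _ = 2 * (u + 2 * v) * (v * klFun (u / v)) := by field_simp

section

variable {ι : Type*} [Fintype ι]

noncomputable def negEntropy (x : ι → ℝ) : ℝ := ∑ i, x i * log (x i)

/-- The generalized Kullback–Leibler divergence: the Bregman divergence of `negEntropy`. -/
noncomputable def genKLDiv (u v : ι → ℝ) : ℝ := ∑ i, klTerm (u i) (v i)

lemma sq_sum_abs_sub_le_genKLDiv {u v : ι → ℝ} (hu : ∀ i, 0 ≤ u i) (hv : ∀ i, 0 ≤ v i)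
    (huv : ∀ i, v i = 0 → u i = 0) :
    (∑ i, |u i - v i|) ^ 2 ≤ 2 / 3 * (∑ i, u i + 2 * ∑ i, v i) * genKLDiv u v := by
  have h := sum_sq_le_sum_mul_sum_of_sq_le_mul univ (r := fun i ↦ |u i - v i|)
    (f := fun i ↦ 2 / 3 * (u i + 2 * v i)) (g := fun i ↦ klTerm (u i) (v i))
    (fun i _ ↦ by linarith [hu i, hv i]) (fun i _ ↦ klTerm_nonneg (hu i) (hv i) (huv i))
    (fun i _ ↦ by linarith [sq_abs (u i - v i), three_mul_sq_sub_le_klTerm (hu i) (hv i) (huv i)])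
  simpa only [genKLDiv, ← mul_sum, sum_add_distrib] using h

lemma negEntropy_gap_eq_genKLDiv (x y : ι → ℝ) (lam : ℝ) :
    lam * negEntropy x + (1 - lam) * negEntropy y
        - negEntropy (fun i ↦ lam * x i + (1 - lam) * y i)
      = lam * genKLDiv x (fun i ↦ lam * x i + (1 - lam) * y i)
        + (1 - lam) * genKLDiv y (fun i ↦ lam * x i + (1 - lam) * y i) := by
  simp only [negEntropy, genKLDiv, klTerm, mul_sum, ← sum_sub_distrib, ← sum_add_distrib]
  exact sum_congr rfl fun i _ ↦ by ring

lemma sq_sum_abs_sub_le_genKLDiv_mixture {x y : ι → ℝ} {M lam : ℝ} (hx0 : ∀ i, 0 ≤ x i)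
    (hy0 : ∀ i, 0 ≤ y i) (hx : ∑ i, x i = M) (hy : ∑ i, y i = M) (hl0 : 0 < lam)
    (hl1 : lam ≤ 1) :
    ((1 - lam) * ∑ i, |x i - y i|) ^ 2
      ≤ 2 * M * genKLDiv x (fun i ↦ lam * x i + (1 - lam) * y i) := by
  set z : ι → ℝ := fun i ↦ lam * x i + (1 - lam) * y i
  have h1l : 0 ≤ 1 - lam := sub_nonneg.2 hl1
  have hz0 (i : ι) : 0 ≤ z i := by have := hx0 i; have := hy0 i; positivity
  have hzx (i : ι) (hzi : z i = 0) : x i = 0 := by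
    have : lam * x i ≤ 0 := by nlinarith [hy0 i]
    exact le_antisymm (nonpos_of_mul_nonpos_right this hl0) (hx0 i)
  have hz : ∑ i, z i = M := by simp only [z, sum_add_distrib, ← mul_sum, hx, hy]; ring
  have habs : ∑ i, |x i - z i| = (1 - lam) * ∑ i, |x i - y i| := by
    rw [mul_sum]
    refine sum_congr rfl fun i _ ↦ ?_
    rw [show x i - z i = (1 - lam) * (x i - y i) by ring, abs_mul, abs_of_nonneg h1l]
  have := sq_sum_abs_sub_le_genKLDiv hx0 hz0 hzx
  rw [habs, hx, hz] at this
  linarith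

theorem negEntropy_strongConvexOn_of_sum_eq {x y : ι → ℝ} {M lam : ℝ} (hx0 : ∀ i, 0 ≤ x i)
    (hy0 : ∀ i, 0 ≤ y i) (hx : ∑ i, x i = M) (hy : ∑ i, y i = M) (hl0 : 0 ≤ lam)
    (hl1 : lam ≤ 1) :
    lam * (1 - lam) * (∑ i, |x i - y i|) ^ 2
      ≤ 2 * M * (lam * negEntropy x + (1 - lam) * negEntropy y
        - negEntropy (fun i ↦ lam * x i + (1 - lam) * y i)) := by
  rcases hl0.eq_or_lt with rfl | hl0
  · simp
  rcases hl1.eq_or_lt with rfl | hl1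
  · simp
  have hxz := sq_sum_abs_sub_le_genKLDiv_mixture hx0 hy0 hx hy hl0 hl1.le
  have hyz := sq_sum_abs_sub_le_genKLDiv_mixture hy0 hx0 hy hx (sub_pos.2 hl1) (by linarith)
  have hmix : (fun i ↦ (1 - lam) * y i + lam * x i) = fun i ↦ lam * x i + (1 - lam) * y i := by
    funext i; ring
  simp only [sub_sub_cancel, hmix, abs_sub_comm (y _)] at hyz
  rw [negEntropy_gap_eq_genKLDiv]
  linear_combination lam * hxz + (1 - lam) * hyz

end

theorem negEntropy_strongly_convex_on_simplex_product_general
    {ι : Type*} [Fintype ι] (K : ℕ)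
    (blk : ι → Fin K) (m : Fin K → ℝ) (hm : ∀ k, 0 < m k)
    (hne : (Finset.univ : Finset (Fin K)).Nonempty)
    (x y : ι → ℝ)
    (hx0 : ∀ i, 0 ≤ x i) (hy0 : ∀ i, 0 ≤ y i)
    (hx : ∀ k, ∑ i ∈ Finset.univ.filter (fun i => blk i = k), x i = m k)
    (hy : ∀ k, ∑ i ∈ Finset.univ.filter (fun i => blk i = k), y i = m k)
    (lam : ℝ) (hl0 : 0 ≤ lam) (hl1 : lam ≤ 1) :
    ∑ i, (lam * x i + (1 - lam) * y i) * Real.log (lam * x i + (1 - lam) * y i)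
      ≤ lam * ∑ i, x i * Real.log (x i) + (1 - lam) * ∑ i, y i * Real.log (y i)
        - lam * (1 - lam) / (2 * K * Finset.univ.sup' hne m)
            * (∑ i, |x i - y i|) ^ 2 := by
  have hmass {w : ι → ℝ} (hw : ∀ k, ∑ i ∈ univ.filter (fun i ↦ blk i = k), w i = m k) :
      ∑ i, w i = ∑ k, m k := by
    rw [← sum_fiberwise univ blk w]
    exact sum_congr rfl fun k _ ↦ hw k
  have hM : 0 < ∑ k, m k := sum_pos (fun k _ ↦ hm k) hne
  have hMK : ∑ k, m k ≤ K * univ.sup' hne m := by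
    simpa using sum_le_card_nsmul univ m _ fun k _ ↦ le_sup' m (mem_univ k)
  have key := negEntropy_strongConvexOn_of_sum_eq hx0 hy0 (hmass hx) (hmass hy) hl0 hl1
  have : lam * (1 - lam) / (2 * K * univ.sup' hne m) * (∑ i, |x i - y i|) ^ 2
      ≤ lam * negEntropy x + (1 - lam) * negEntropy y
        - negEntropy (fun i ↦ lam * x i + (1 - lam) * y i) :=
    calc lam * (1 - lam) / (2 * K * univ.sup' hne m) * (∑ i, |x i - y i|) ^ 2
        = lam * (1 - lam) * (∑ i, |x i - y i|) ^ 2 / (2 * K * univ.sup' hne m) := by ring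
      _ ≤ lam * (1 - lam) * (∑ i, |x i - y i|) ^ 2 / (2 * ∑ k, m k) :=
        div_le_div_of_nonneg_left (by positivity) (by positivity) (by linarith)
      _ ≤ _ := (div_le_iff₀' (by positivity)).2 key
  unfold negEntropy at this
  linarith

/-- Strong convexity of the negative entropy `h x = ∑ i, x i * log (x i)` on a product of
scaled simplices, w.r.t. the `ℓ¹` norm, with modulus `1 / (K m_max)`: coordinates are
indexed by a finite type `ι`, partitioned into `K` blocks by `blk : ι → Fin K`; points of
`𝒳` are nonnegative and have block sums `m k`; `m_max = max_k m k`. -/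
theorem negEntropy_strongly_convex_on_simplex_product
    {ι : Type*} [Fintype ι] [DecidableEq ι] (K : ℕ) (hK : 0 < K)
    (blk : ι → Fin K) (m : Fin K → ℝ) (hm : ∀ k, 0 < m k)
    (hne : (Finset.univ : Finset (Fin K)).Nonempty)
    (x y : ι → ℝ)
    (hx0 : ∀ i, 0 ≤ x i) (hy0 : ∀ i, 0 ≤ y i)
    (hx : ∀ k, ∑ i ∈ Finset.univ.filter (fun i => blk i = k), x i = m k)
    (hy : ∀ k, ∑ i ∈ Finset.univ.filter (fun i => blk i = k), y i = m k)
    (lam : ℝ) (hl0 : 0 ≤ lam) (hl1 : lam ≤ 1) :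
    ∑ i, (lam * x i + (1 - lam) * y i) * Real.log (lam * x i + (1 - lam) * y i)
      ≤ lam * ∑ i, x i * Real.log (x i) + (1 - lam) * ∑ i, y i * Real.log (y i)
        - lam * (1 - lam) / (2 * K * Finset.univ.sup' hne m)
            * (∑ i, |x i - y i|) ^ 2 :=
  negEntropy_strongly_convex_on_simplex_product_general K blk m hm hne x y hx0 hy0 hx hy lam hl0 hl1
end

section
/- Let $(a_t)_{t\ge 1}$, $(b_t)_{t\ge 1}$ be nonnegative reals and set $\tilde{\eta}^{t+1} = 1/\sqrt{1 + 2\sum_{s=1}^{t} a_s}$. Let $C, c > 0$ and define $\phi(\eta) = 4C\eta - \frac{1}{8c\,\eta}$. Then $\sum_{t=1}^{T} \phi(\tilde\eta^{t+1})\, a_t \le 32\sqrt{2c}\, C^{3/2}$ for every $T \ge 1$. -/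
/-- "Only finitely many positive terms" bound: with `η̃^{t+1} = 1/√(1 + 2 ∑_{s≤t} a s)`
and `φ(η) = 4 C η - 1/(8 c η)`, for nonnegative `a t` (and `b t`) and `C, c > 0`,
`∑_{t=1}^T φ(η̃^{t+1}) a t ≤ 32 √(2c) C^{3/2}` for every `T ≥ 1`. -/
theorem adaptive_negative_tail_bound (a b : ℕ → ℝ)
    (ha : ∀ t, 0 ≤ a t) (hb : ∀ t, 0 ≤ b t)
    (C c : ℝ) (hC : 0 < C) (hc : 0 < c) :
    ∀ T : ℕ, 1 ≤ T →
      ∑ t ∈ Finset.Icc 1 T,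
          (4 * C * (1 / Real.sqrt (1 + 2 * ∑ s ∈ Finset.Icc 1 t, a s))
            - 1 / (8 * c * (1 / Real.sqrt (1 + 2 * ∑ s ∈ Finset.Icc 1 t, a s))))
            * a t
        ≤ 32 * Real.sqrt (2 * c) * C ^ ((3 : ℝ) / 2) := by
  set S : ℕ → ℝ := fun t => 1 + 2 * ∑ s ∈ Finset.Icc 1 t, a s with hS
  set K : ℝ := 32 * c * C with hK
  have hK0 : 0 < K := by positivity
  have hS1 : ∀ t, 1 ≤ S t := by
    intro t
    have : 0 ≤ ∑ s ∈ Finset.Icc 1 t, a s := Finset.sum_nonneg fun s _ => ha s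
    simp only [hS]; linarith
  have hSpos : ∀ t, 0 < S t := fun t => lt_of_lt_of_le one_pos (hS1 t)
  have hSsucc : ∀ t, S (t + 1) = S t + 2 * a (t + 1) := by
    intro t
    simp only [hS]
    rw [Finset.sum_Icc_succ_top (Nat.le_add_left 1 t)]
    ring
  -- main induction: partial sums bounded by 4C√(min (S T) K)
  have main : ∀ T : ℕ,
      ∑ t ∈ Finset.Icc 1 T,
          (4 * C * (1 / Real.sqrt (S t)) - 1 / (8 * c * (1 / Real.sqrt (S t)))) * a t
        ≤ 4 * C * Real.sqrt (min (S T) K) := by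
    intro T
    induction T with
    | zero =>
      simp only [Finset.Icc_eq_empty (by norm_num : ¬ (1:ℕ) ≤ 0), Finset.sum_empty]
      positivity
    | succ T ih =>
      rw [Finset.sum_Icc_succ_top (Nat.le_add_left 1 T)]
      have hu := hSpos T
      have hv := hSpos (T + 1)
      have huv : S T ≤ S (T + 1) := by
        rw [hSsucc]; have := ha (T + 1); linarith
      have hsu : Real.sqrt (S T) > 0 := Real.sqrt_pos.mpr hu
      have hsv : Real.sqrt (S (T + 1)) > 0 := Real.sqrt_pos.mpr hv
      have hsqu : Real.sqrt (S T) ^ 2 = S T := Real.sq_sqrt hu.le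
      have hsqv : Real.sqrt (S (T + 1)) ^ 2 = S (T + 1) := Real.sq_sqrt hv.le
      have hstep : (4 * C * (1 / Real.sqrt (S (T+1))) - 1 / (8 * c * (1 / Real.sqrt (S (T+1))))) * a (T+1)
          ≤ 4 * C * (Real.sqrt (min (S (T+1)) K) - Real.sqrt (min (S T) K)) := by
        have hrw : 1 / (8 * c * (1 / Real.sqrt (S (T+1)))) = Real.sqrt (S (T+1)) / (8 * c) := by
          field_simp
        rw [hrw]
        by_cases hvK : S (T + 1) ≤ K
        · have huK : S T ≤ K := le_trans huv hvK
          rw [min_eq_left hvK, min_eq_left huK]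
          have h1 : a (T+1) / Real.sqrt (S (T+1)) ≤ Real.sqrt (S (T+1)) - Real.sqrt (S T) := by
            rw [div_le_iff₀ hsv]
            have hgm : 2 * (Real.sqrt (S T) * Real.sqrt (S (T+1))) ≤ S T + S (T+1) := by
              nlinarith [sq_nonneg (Real.sqrt (S T) - Real.sqrt (S (T+1)))]
            have := hSsucc T
            nlinarith
          have h2 : (4 * C * (1 / Real.sqrt (S (T+1))) - Real.sqrt (S (T+1)) / (8 * c)) * a (T+1)
              ≤ 4 * C * (a (T+1) / Real.sqrt (S (T+1))) := by
            have h3 : 0 ≤ Real.sqrt (S (T+1)) / (8 * c) * a (T+1) := mul_nonneg (by positivity) (ha (T+1))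
            have := ha (T+1)
            rw [mul_comm (4*C)]
            rw [sub_mul]
            have : 4 * C * (1 / Real.sqrt (S (T+1))) * a (T+1) = a (T+1) / Real.sqrt (S (T+1)) * (4 * C) := by
              ring
            linarith [this]
          calc (4 * C * (1 / Real.sqrt (S (T+1))) - Real.sqrt (S (T+1)) / (8 * c)) * a (T+1)
              ≤ 4 * C * (a (T+1) / Real.sqrt (S (T+1))) := h2
            _ ≤ 4 * C * (Real.sqrt (S (T+1)) - Real.sqrt (S T)) := by
                apply mul_le_mul_of_nonneg_left h1 (by positivity)
        · push_neg at hvK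
          have hneg : (4 * C * (1 / Real.sqrt (S (T+1))) - Real.sqrt (S (T+1)) / (8 * c)) * a (T+1) ≤ 0 := by
            apply mul_nonpos_of_nonpos_of_nonneg _ (ha (T+1))
            have : 4 * C * (1 / Real.sqrt (S (T+1))) ≤ Real.sqrt (S (T+1)) / (8 * c) := by
              rw [mul_one_div, div_le_div_iff₀ hsv (by positivity)]
              nlinarith [hsqv]
            linarith
          have hmono : Real.sqrt (min (S T) K) ≤ Real.sqrt (min (S (T+1)) K) :=
            Real.sqrt_le_sqrt (le_min (min_le_left _ _ |>.trans huv) (min_le_right _ _))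
          nlinarith
      linarith
  intro T hT
  have hfin : 4 * C * Real.sqrt (min (S T) K) ≤ 32 * Real.sqrt (2 * c) * C ^ ((3 : ℝ) / 2) := by
    have h1 : Real.sqrt (min (S T) K) ≤ Real.sqrt K :=
      Real.sqrt_le_sqrt (min_le_right _ _)
    have h2 : Real.sqrt K = 4 * Real.sqrt (2 * c) * Real.sqrt C := by
      rw [show K = (4 * Real.sqrt (2 * c) * Real.sqrt C) ^ 2 by
        have e1 : Real.sqrt (2*c) ^ 2 = 2 * c := Real.sq_sqrt (by positivity)
        have e2 : Real.sqrt C ^ 2 = C := Real.sq_sqrt hC.le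
        rw [hK]; nlinarith]
      exact Real.sqrt_sq (by positivity)
    have h3 : C ^ ((3 : ℝ) / 2) = C * Real.sqrt C := by
      rw [show (3:ℝ)/2 = 1 + 1/2 by norm_num, Real.rpow_add hC, Real.rpow_one,
        ← Real.sqrt_eq_rpow]
    rw [h3]
    have hsc : 0 ≤ Real.sqrt (2 * c) := Real.sqrt_nonneg _
    have hsC : 0 ≤ Real.sqrt C := Real.sqrt_nonneg _
    nlinarith [Real.sqrt_nonneg (min (S T) K)]
  exact le_trans (main T) hfin
end
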